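/- arXiv:1209.1130 — 2 statements merged into one kernel-verified Lean document; each statement's English description precedes it below -/
import Mathlib

section
/- Let a, b ≥ 0, C ≥ 0, D ≥ 0, and let f : [0, a] × [0, b] → [0, ∞) be continuous and satisfy f(u, ū) ≤ D + C∫₀ᵘ f(u′, ū) du′ + C∫₀^{ū} f(u, ū′) dū′ for all (u, ū) ∈ [0, a] × [0, b]. Then f(u, ū) ≤ D · e^{2C(u + ū)} for all (u, ū) ∈ [0, a] × [0, b]. -/
/-!
The function `E u v = D * exp (2 * C * (u + v))` is a supersolution: its edge integrals add up to
`E u v - D * (exp (2 * C * u) + exp (2 * C * v)) / 2 ≤ E u v - D`. So `g = f - E` satisfies the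
homogeneous inequality `g ≤ C ∫₀ᵘ g(·, v) + C ∫₀ᵛ g(u, ·)`. Starting from a bound `M` for `g` on the
compact rectangle and iterating this inequality gives `g u v ≤ M (2C(u + v))ⁿ / n!` for every `n`,
hence `g ≤ 0`.
-/

open Real Set MeasureTheory intervalIntegral Filter Function Nat Topology

noncomputable def edgeIntegrals (C : ℝ) (h : ℝ → ℝ → ℝ) (u v : ℝ) : ℝ :=
  C * (∫ s in (0 : ℝ)..u, h s v) + C * ∫ s in (0 : ℝ)..v, h u s

lemma integral_pow_add_le (u : ℝ) {v : ℝ} (hv : 0 ≤ v) (n : ℕ) :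
    ∫ s in (0 : ℝ)..u, (s + v) ^ n ≤ (u + v) ^ (n + 1) / (n + 1) := by
  rw [intervalIntegral.integral_comp_add_right (· ^ n), integral_pow, zero_add]
  gcongr
  exact sub_le_self _ (by positivity)

lemma mul_integral_pow_div_factorial_le {C : ℝ} (hC : 0 ≤ C) {M : ℝ} (hM : 0 ≤ M) (u : ℝ)
    {v : ℝ} (hv : 0 ≤ v) (n : ℕ) :
    C * ∫ s in (0 : ℝ)..u, M * (2 * C * (s + v)) ^ n / n !
      ≤ M * (2 * C * (u + v)) ^ (n + 1) / (2 * (n + 1)!) := by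
  have hfac : ((n + 1)! : ℝ) = (n + 1) * n ! := by push_cast [factorial_succ]; ring
  have hintegrand : (fun s ↦ M * (2 * C * (s + v)) ^ n / n !)
      = fun s ↦ M * (2 * C) ^ n / n ! * (s + v) ^ n := by
    ext s; rw [mul_pow]; ring
  calc C * ∫ s in (0 : ℝ)..u, M * (2 * C * (s + v)) ^ n / n !
      = C * (M * (2 * C) ^ n / n !) * ∫ s in (0 : ℝ)..u, (s + v) ^ n := by
        rw [hintegrand, intervalIntegral.integral_const_mul, mul_assoc]
    _ ≤ C * (M * (2 * C) ^ n / n !) * ((u + v) ^ (n + 1) / (n + 1)) := by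
        gcongr; exact integral_pow_add_le u hv n
    _ = M * (2 * C * (u + v)) ^ (n + 1) / (2 * (n + 1)!) := by
        rw [hfac, mul_pow (2 * C)]; field_simp; ring

lemma edgeIntegrals_pow_div_factorial_le {C : ℝ} (hC : 0 ≤ C) {M : ℝ} (hM : 0 ≤ M)
    {u v : ℝ} (hu : 0 ≤ u) (hv : 0 ≤ v) (n : ℕ) :
    edgeIntegrals C (fun s t ↦ M * (2 * C * (s + t)) ^ n / n !) u v
      ≤ M * (2 * C * (u + v)) ^ (n + 1) / (n + 1)! := by
  have hside_u := mul_integral_pow_div_factorial_le hC hM u hv n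
  have hside_v := mul_integral_pow_div_factorial_le hC hM v hu n
  simp only [add_comm _ u] at hside_v
  have hhalves : M * (2 * C * (u + v)) ^ (n + 1) / (n + 1)!
      = 2 * (M * (2 * C * (u + v)) ^ (n + 1) / (2 * (n + 1)!)) := by
    field_simp
  simp only [edgeIntegrals]
  linarith

lemma mul_integral_exp_add (C u v : ℝ) :
    C * ∫ s in (0 : ℝ)..u, exp (2 * C * (s + v))
      = (exp (2 * C * (u + v)) - exp (2 * C * v)) / 2 := by
  have hderiv : ∀ s ∈ uIcc (0 : ℝ) u,
      HasDerivAt (fun t => exp (2 * C * (t + v)) / 2) (C * exp (2 * C * (s + v))) s := fun s _ ↦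
    ((((hasDerivAt_id s).add_const v).const_mul (2 * C)).exp.div_const 2).congr_deriv
      (by simp only [id]; ring)
  rw [← intervalIntegral.integral_const_mul,
    integral_eq_sub_of_hasDerivAt hderiv ((by fun_prop : Continuous _).intervalIntegrable _ _),
    zero_add]
  ring

lemma add_edgeIntegrals_exp_le {C D u v : ℝ} (hC : 0 ≤ C) (hD : 0 ≤ D) (hu : 0 ≤ u) (hv : 0 ≤ v) :
    D + edgeIntegrals C (fun s t ↦ D * exp (2 * C * (s + t))) u v ≤ D * exp (2 * C * (u + v)) := by
  have hexp_u : D * 1 ≤ D * exp (2 * C * u) := by gcongr; exact one_le_exp (by positivity)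
  have hexp_v : D * 1 ≤ D * exp (2 * C * v) := by gcongr; exact one_le_exp (by positivity)
  have hside_u := mul_integral_exp_add C u v
  have hside_v : C * ∫ s in (0 : ℝ)..v, exp (2 * C * (u + s))
      = (exp (2 * C * (u + v)) - exp (2 * C * u)) / 2 := by
    simpa only [add_comm] using mul_integral_exp_add C v u
  simp only [edgeIntegrals, intervalIntegral.integral_const_mul, mul_left_comm C D]
  rw [hside_u, hside_v]
  linarith

section Rectangle

variable {a b C : ℝ} {h k : ℝ → ℝ → ℝ} {u v : ℝ}

lemma ContinuousOn.intervalIntegrable_left_slice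
    (hh : ContinuousOn (uncurry h) (Icc 0 a ×ˢ Icc 0 b)) (hu : u ∈ Icc 0 a) (hv : v ∈ Icc 0 b) :
    IntervalIntegrable (fun s ↦ h s v) volume 0 u := by
  refine ContinuousOn.intervalIntegrable ?_
  rw [uIcc_of_le hu.1]
  exact hh.comp (continuous_id.prodMk continuous_const).continuousOn
    fun s hs ↦ ⟨⟨hs.1, hs.2.trans hu.2⟩, hv⟩

lemma ContinuousOn.intervalIntegrable_right_slice
    (hh : ContinuousOn (uncurry h) (Icc 0 a ×ˢ Icc 0 b)) (hu : u ∈ Icc 0 a) (hv : v ∈ Icc 0 b) :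
    IntervalIntegrable (fun s ↦ h u s) volume 0 v := by
  refine ContinuousOn.intervalIntegrable ?_
  rw [uIcc_of_le hv.1]
  exact hh.comp (continuous_const.prodMk continuous_id).continuousOn
    fun s hs ↦ ⟨hu, ⟨hs.1, hs.2.trans hv.2⟩⟩

lemma edgeIntegrals_sub (hh : ContinuousOn (uncurry h) (Icc 0 a ×ˢ Icc 0 b))
    (hk : ContinuousOn (uncurry k) (Icc 0 a ×ˢ Icc 0 b)) (hu : u ∈ Icc 0 a) (hv : v ∈ Icc 0 b) :
    edgeIntegrals C (fun s t ↦ h s t - k s t) u v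
      = edgeIntegrals C h u v - edgeIntegrals C k u v := by
  simp only [edgeIntegrals]
  rw [integral_sub (hh.intervalIntegrable_left_slice hu hv)
      (hk.intervalIntegrable_left_slice hu hv),
    integral_sub (hh.intervalIntegrable_right_slice hu hv)
      (hk.intervalIntegrable_right_slice hu hv)]
  ring

lemma edgeIntegrals_mono (hC : 0 ≤ C) (hh : ContinuousOn (uncurry h) (Icc 0 a ×ˢ Icc 0 b))
    (hk : ContinuousOn (uncurry k) (Icc 0 a ×ˢ Icc 0 b))
    (hle : ∀ u ∈ Icc 0 a, ∀ v ∈ Icc 0 b, h u v ≤ k u v) (hu : u ∈ Icc 0 a) (hv : v ∈ Icc 0 b) :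
    edgeIntegrals C h u v ≤ edgeIntegrals C k u v := by
  unfold edgeIntegrals
  gcongr
  · exact integral_mono_on hu.1 (hh.intervalIntegrable_left_slice hu hv)
      (hk.intervalIntegrable_left_slice hu hv) fun s hs ↦ hle s ⟨hs.1, hs.2.trans hu.2⟩ v hv
  · exact integral_mono_on hv.1 (hh.intervalIntegrable_right_slice hu hv)
      (hk.intervalIntegrable_right_slice hu hv) fun s hs ↦ hle u hu s ⟨hs.1, hs.2.trans hv.2⟩

lemma le_mul_pow_div_factorial_of_le_edgeIntegrals (hC : 0 ≤ C)
    (hh : ContinuousOn (uncurry h) (Icc 0 a ×ˢ Icc 0 b))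
    (hsub : ∀ u ∈ Icc 0 a, ∀ v ∈ Icc 0 b, h u v ≤ edgeIntegrals C h u v)
    {M : ℝ} (hM : 0 ≤ M) (hbound : ∀ u ∈ Icc 0 a, ∀ v ∈ Icc 0 b, h u v ≤ M) (n : ℕ) :
    ∀ u ∈ Icc 0 a, ∀ v ∈ Icc 0 b, h u v ≤ M * (2 * C * (u + v)) ^ n / n ! := by
  induction n with
  | zero => simpa using hbound
  | succ n ih =>
    intro u hu v hv
    calc h u v ≤ edgeIntegrals C h u v := hsub u hu v hv
      _ ≤ edgeIntegrals C (fun s t ↦ M * (2 * C * (s + t)) ^ n / n !) u v :=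
        edgeIntegrals_mono hC hh (Continuous.continuousOn (by fun_prop)) ih hu hv
      _ ≤ M * (2 * C * (u + v)) ^ (n + 1) / (n + 1)! :=
        edgeIntegrals_pow_div_factorial_le hC hM hu.1 hv.1 n

lemma nonpos_of_le_edgeIntegrals (hC : 0 ≤ C) (hh : ContinuousOn (uncurry h) (Icc 0 a ×ˢ Icc 0 b))
    (hsub : ∀ u ∈ Icc 0 a, ∀ v ∈ Icc 0 b, h u v ≤ edgeIntegrals C h u v) :
    ∀ u ∈ Icc 0 a, ∀ v ∈ Icc 0 b, h u v ≤ 0 := by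
  obtain ⟨M, hM⟩ := (isCompact_Icc.prod isCompact_Icc).exists_bound_of_continuousOn hh
  have hbound : ∀ u ∈ Icc 0 a, ∀ v ∈ Icc 0 b, h u v ≤ max M 0 := fun u hu v hv ↦
    (le_abs_self _).trans ((hM (u, v) ⟨hu, hv⟩).trans (le_max_left _ _))
  intro u hu v hv
  have hlim : Tendsto (fun n : ℕ ↦ max M 0 * (2 * C * (u + v)) ^ n / n !) atTop (𝓝 0) := by
    simpa [mul_div_assoc] using
      (FloorSemiring.tendsto_pow_div_factorial_atTop (2 * C * (u + v))).const_mul (max M 0)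
  exact ge_of_tendsto' hlim fun n ↦
    le_mul_pow_div_factorial_of_le_edgeIntegrals hC hh hsub (le_max_right _ _) hbound n u hu v hv

end Rectangle

theorem stmt14_general (a b C D : ℝ) (hC : 0 ≤ C) (hD : 0 ≤ D)
    (f : ℝ → ℝ → ℝ)
    (hcont : ContinuousOn (fun p : ℝ × ℝ => f p.1 p.2) (Set.Icc 0 a ×ˢ Set.Icc 0 b))
    (hineq : ∀ u ∈ Set.Icc (0 : ℝ) a, ∀ v ∈ Set.Icc (0 : ℝ) b,
      f u v ≤ D + C * (∫ s in (0 : ℝ)..u, f s v) + C * ∫ s in (0 : ℝ)..v, f u s) :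
    ∀ u ∈ Set.Icc (0 : ℝ) a, ∀ v ∈ Set.Icc (0 : ℝ) b,
      f u v ≤ D * Real.exp (2 * C * (u + v)) := by
  set E : ℝ → ℝ → ℝ := fun s t ↦ D * exp (2 * C * (s + t))
  have hE : ContinuousOn (uncurry E) (Icc 0 a ×ˢ Icc 0 b) := Continuous.continuousOn (by fun_prop)
  have hsub : ∀ u ∈ Icc 0 a, ∀ v ∈ Icc 0 b,
      f u v - E u v ≤ edgeIntegrals C (fun s t ↦ f s t - E s t) u v := by
    intro u hu v hv
    rw [edgeIntegrals_sub (C := C) hcont hE hu hv]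
    have hsuper := add_edgeIntegrals_exp_le hC hD hu.1 hv.1
    have hf := hineq u hu v hv
    simp only [edgeIntegrals] at hsuper ⊢
    linarith
  intro u hu v hv
  exact sub_nonpos.mp
    (nonpos_of_le_edgeIntegrals (h := fun s t ↦ f s t - E s t) hC (hcont.sub hE) hsub u hu v hv)

/-- Let `a, b ≥ 0`, `C ≥ 0`, `D ≥ 0`, and let
`f : [0,a] × [0,b] → [0,∞)` be continuous with
`f(u,ū) ≤ D + C ∫₀ᵘ f(u',ū) du' + C ∫₀^ū f(u,ū') dū'` on `[0,a] × [0,b]`.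
Then `f(u,ū) ≤ D e^{2C(u+ū)}` on `[0,a] × [0,b]`. -/
theorem stmt14 (a b C D : ℝ) (ha : 0 ≤ a) (hb : 0 ≤ b) (hC : 0 ≤ C) (hD : 0 ≤ D)
    (f : ℝ → ℝ → ℝ)
    (hcont : ContinuousOn (fun p : ℝ × ℝ => f p.1 p.2) (Set.Icc 0 a ×ˢ Set.Icc 0 b))
    (hnonneg : ∀ u ∈ Set.Icc (0 : ℝ) a, ∀ v ∈ Set.Icc (0 : ℝ) b, 0 ≤ f u v)
    (hineq : ∀ u ∈ Set.Icc (0 : ℝ) a, ∀ v ∈ Set.Icc (0 : ℝ) b,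
      f u v ≤ D + C * (∫ s in (0 : ℝ)..u, f s v) + C * ∫ s in (0 : ℝ)..v, f u s) :
    ∀ u ∈ Set.Icc (0 : ℝ) a, ∀ v ∈ Set.Icc (0 : ℝ) b,
      f u v ≤ D * Real.exp (2 * C * (u + v)) :=
  stmt14_general a b C D hC hD f hcont hineq
end

section
/- Let T : Fin 2 × Fin 2 × Fin 2 → ℝ satisfy, for all indices a, b, c: T(c, a, b) = T(c, b, a) (symmetry in the last two slots) and Σ_a T(c, a, a) = 0 (tracelessness in the last two slots). Let ε be the alternating symbol on Fin 2 with ε(1,2) = 1, ε(2,1) = −1, ε(1,1) = ε(2,2) = 0. Then for every index a: Σ_{b,c} ε(b, c) · T(b, c, a) = Σ_b ε(a, b) · (Σ_c T(c, c, b)). That is, the curl-type contraction of T equals the Hodge dual of the divergence-type contraction of T. -/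
/-- Let `T : Fin 2 × Fin 2 × Fin 2 → ℝ` be symmetric and traceless in
its last two slots, and let `ε` be the alternating symbol on `Fin 2`.  Then for every
index `a`: `Σ_{b,c} ε(b,c) T(b,c,a) = Σ_b ε(a,b) (Σ_c T(c,c,b))`, i.e. the curl-type
contraction of `T` equals the Hodge dual of the divergence-type contraction of `T`. -/
theorem stmt16 (T : Fin 2 → Fin 2 → Fin 2 → ℝ)
    (hsym : ∀ c a b, T c a b = T c b a)
    (htraceless : ∀ c, ∑ a, T c a a = 0)
    (ε : Fin 2 → Fin 2 → ℝ)
    (hε01 : ε 0 1 = 1) (hε10 : ε 1 0 = -1) (hε00 : ε 0 0 = 0) (hε11 : ε 1 1 = 0) :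
    ∀ a, ∑ b, ∑ c, ε b c * T b c a = ∑ b, ε a b * ∑ c, T c c b := by
  have h0 := htraceless 0
  have h1 := htraceless 1
  simp only [Fin.sum_univ_two] at h0 h1 ⊢
  intro a
  fin_cases a <;>
    simp [hε01, hε10, hε00, hε11, hsym 0 1 0, hsym 1 1 0] <;> linarith
end
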